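/- Fix an integer n ≥ 1 and a real α, and let F : ℤ → ℝ be the step data F_i = 10 for i ≤ −1 and F_i = −10 for i ≥ 0. After one refinement step of the (2n+2)-point combined scheme, the vertex-rule values adjacent to the discontinuity are P¹_{−2} = Σ_{j=0}^{2n} v_j F_{−1+j−n} and P¹_0 = Σ_{j=0}^{2n} v_j F_{j−n}, and the undershoot conditions P¹_{−2} < 10 and P¹_0 > −10 both hold if and only if α < 0. -/
import Mathlib


/-- The Deslauriers–Dubuc coefficients of the `(2n+2)`-point interpolatory scheme. -/
noncomputable def ddCoef (n j : ℕ) : ℝ :=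
  (1 / 2 ^ (4 * n + 1)) *
    ((-1 : ℝ) ^ ((j : ℤ) - n - 1) * (n + 1) / ((2 * (j : ℤ) - 2 * n - 1 : ℤ) : ℝ)) *
    (Nat.choose (2 * n + 1) n : ℝ) * (Nat.choose (2 * n + 1) j : ℝ)

/-- The vertex-rule coefficients of the `(2n+2)`-point combined binary subdivision scheme. -/
noncomputable def vCoef (n : ℕ) (α : ℝ) (j : ℕ) : ℝ :=
  if j = n then
    1 + α - α / 2 ^ (4 * n + 1) * (Nat.choose (4 * n + 2) (2 * n + 1) : ℝ)
  else
    -(α / 2 ^ (4 * n + 1)) * (Nat.choose (4 * n + 2) (2 * j + 1) : ℝ)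

/-- The edge-rule coefficients of the `(2n+2)`-point combined binary subdivision scheme. -/
noncomputable def eCoef (n : ℕ) (α : ℝ) (j : ℕ) : ℝ :=
  (1 + α) * ddCoef n j - α / 2 ^ (4 * n + 1) * (Nat.choose (4 * n + 2) (2 * j) : ℝ)

/-- The step data with a jump discontinuity between indices −1 and 0. -/
noncomputable def stepData (i : ℤ) : ℝ := if i ≤ -1 then 10 else -10



lemma two_mul_centralBinom_lt (m : ℕ) (hm : 3 ≤ m) :
    2 * Nat.centralBinom m < 4 ^ m := by
  induction m with
  | zero => omega
  | succ k ih =>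
    rcases Nat.lt_or_ge k 3 with hk | hk
    · interval_cases k
      · omega
      · omega
      · -- k = 2, m = 3 : centralBinom 3 = 20
        norm_num [Nat.centralBinom, Nat.choose]
    · have h1 := Nat.succ_mul_centralBinom_succ k
      have h2 := ih hk
      have : (k + 1) * (2 * Nat.centralBinom (k + 1)) < (k + 1) * 4 ^ (k + 1) := by
        calc (k + 1) * (2 * Nat.centralBinom (k + 1))
            = 2 * ((k + 1) * Nat.centralBinom (k + 1)) := by ring
          _ = 2 * (2 * (2 * k + 1) * Nat.centralBinom k) := by rw [h1]
          _ < 2 * (2 * (2 * k + 2) * Nat.centralBinom k) := by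
              have := Nat.centralBinom_pos k
              have h3 : 2 * k + 1 < 2 * k + 2 := by omega
              gcongr <;> omega
          _ = (k + 1) * (4 * (2 * Nat.centralBinom k)) := by ring
          _ ≤ (k + 1) * (4 * (4 ^ k)) := by
              exact Nat.mul_le_mul_left _ (Nat.mul_le_mul_left _ (le_of_lt h2))
          _ = (k + 1) * 4 ^ (k + 1) := by ring
      exact Nat.lt_of_mul_lt_mul_left this

lemma choose_lt (n : ℕ) (hn : 1 ≤ n) :
    (Nat.choose (4 * n + 2) (2 * n + 1) : ℝ) < 2 ^ (4 * n + 1) := by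
  have h1 : Nat.choose (4 * n + 2) (2 * n + 1) = Nat.centralBinom (2 * n + 1) := by
    rw [Nat.centralBinom_eq_two_mul_choose]
    congr 1
    omega
  have h2 := two_mul_centralBinom_lt (2 * n + 1) (by omega)
  have h3 : 2 * Nat.choose (4 * n + 2) (2 * n + 1) < 2 * 2 ^ (4 * n + 1) := by
    rw [h1]
    calc 2 * Nat.centralBinom (2 * n + 1) < 4 ^ (2 * n + 1) := h2
      _ = 2 * 2 ^ (4 * n + 1) := by
          rw [show (4 : ℕ) = 2 ^ 2 by norm_num, ← pow_mul]
          rw [show 2 * (2 * n + 1) = (4 * n + 1) + 1 by ring, pow_succ]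
          ring
  have h4 : Nat.choose (4 * n + 2) (2 * n + 1) < 2 ^ (4 * n + 1) := by omega
  exact_mod_cast h4

lemma vCoef_symm (n : ℕ) (α : ℝ) (j : ℕ) (hj : j ≤ 2 * n) :
    vCoef n α (2 * n - j) = vCoef n α j := by
  rcases eq_or_ne j n with rfl | hne
  · congr 1; omega
  · have hne' : 2 * n - j ≠ n := by omega
    rw [vCoef, vCoef, if_neg hne', if_neg hne]
    congr 2
    have h1 : 2 * j + 1 ≤ 4 * n + 2 := by omega
    have h2 : 4 * n + 2 - (2 * j + 1) = 2 * (2 * n - j) + 1 := by omega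
    rw [← Nat.choose_symm h1, h2]

/-- Undershoot conditions at the first subdivision level hold iff α < 0. -/
theorem undershoot_iff_alpha_neg (n : ℕ) (hn : 1 ≤ n) (α : ℝ) :
    ((∑ j ∈ Finset.range (2 * n + 1), vCoef n α j * stepData (-1 + j - n) < 10) ∧
     (-10 < ∑ j ∈ Finset.range (2 * n + 1), vCoef n α j * stepData (j - n))) ↔
    α < 0 := by
  set S1 := ∑ j ∈ Finset.range (2 * n + 1), vCoef n α j * stepData (-1 + j - n) with hS1
  set S2 := ∑ j ∈ Finset.range (2 * n + 1), vCoef n α j * stepData (j - n) with hS2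
  -- S2 reflected
  have hS2' : S2 = ∑ j ∈ Finset.range (2 * n + 1), vCoef n α j * stepData (n - j) := by
    rw [hS2, ← Finset.sum_range_reflect (fun j => vCoef n α j * stepData (j - n))]
    apply Finset.sum_congr rfl
    intro j hj
    rw [Finset.mem_range] at hj
    have hj' : j ≤ 2 * n := by omega
    have e1 : 2 * n + 1 - 1 - j = 2 * n - j := by omega
    rw [e1, vCoef_symm n α j hj']
    congr 2
    push_cast [Nat.cast_sub hj']
    ring
  -- S1 + S2 = 0
  have hsum : S1 + S2 = 0 := by
    rw [hS1, hS2', ← Finset.sum_add_distrib]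
    apply Finset.sum_eq_zero
    intro j hj
    have : stepData (-1 + j - n) + stepData ((n : ℤ) - j) = 0 := by
      rcases le_or_gt (j : ℤ) n with h | h
      · rw [stepData, stepData, if_pos (by omega), if_neg (by omega)]; ring
      · rw [stepData, stepData, if_neg (by omega), if_pos (by omega)]; ring
    calc vCoef n α j * stepData (-1 + j - n) + vCoef n α j * stepData ((n : ℤ) - j)
        = vCoef n α j * (stepData (-1 + j - n) + stepData ((n : ℤ) - j)) := by ring
      _ = 0 := by rw [this, mul_zero]
  -- S1 - S2 = 20 * v_n
  have hdiff : S1 - S2 = 20 * vCoef n α n := by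
    rw [hS1, hS2, ← Finset.sum_sub_distrib]
    rw [Finset.sum_eq_single_of_mem n (Finset.mem_range.mpr (by omega))]
    · have e1 : (-1 : ℤ) + n - n = -1 := by ring
      have e2 : (n : ℤ) - n = 0 := by ring
      rw [e1, e2, stepData, stepData, if_pos (by omega), if_neg (by omega)]
      ring
    · intro j _ hne
      have : stepData (-1 + j - n) = stepData ((j : ℤ) - n) := by
        rcases lt_or_gt_of_ne hne with h | h
        · rw [stepData, stepData, if_pos (by push_cast; omega), if_pos (by push_cast; omega)]
        · rw [stepData, stepData, if_neg (by push_cast; omega), if_neg (by push_cast; omega)]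
      rw [this]; ring
  have hv1 : S1 = 10 * vCoef n α n := by linarith
  have hv2 : S2 = -(10 * vCoef n α n) := by linarith
  have hvn : vCoef n α n =
      1 + α * (1 - (Nat.choose (4 * n + 2) (2 * n + 1) : ℝ) / 2 ^ (4 * n + 1)) := by
    rw [vCoef, if_pos rfl]; ring
  have hcpos : (0 : ℝ) < 1 - (Nat.choose (4 * n + 2) (2 * n + 1) : ℝ) / 2 ^ (4 * n + 1) := by
    have := choose_lt n hn
    have h2 : (0 : ℝ) < 2 ^ (4 * n + 1) := by positivity
    rw [sub_pos, div_lt_one h2]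
    exact this
  rw [hv1, hv2, hvn]
  constructor
  · rintro ⟨h1, _⟩
    nlinarith
  · intro h
    constructor <;> nlinarith
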